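/- Let r, p, n be positive integers with p dividing r and let g ∈ G(r,1,n). Then the following are equivalent: (i) the conjugation map Ad(g) : x ↦ gxg⁻¹ restricts to an inner automorphism of G(r,p,n); (ii) gπg⁻¹ is conjugate to π inside G(r,p,n) for every π ∈ S_n; (iii) Δ(g) ∈ dZ_r, where d = gcd(p,n). -/

import Mathlib

open scoped Classical BigOperators
open CategoryTheory

noncomputable section

/-- The twisted centralizer of `ω` under `τ`-twisted conjugation. -/
def twistedCent {G : Type*} [Group G] (τ : G ≃* G) (ω : G) : Subgroup G where
  carrier := {g | g * ω * (τ g)⁻¹ = ω}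
  one_mem' := by simp
  mul_mem' := by
    intro a b ha hb
    simp only [Set.mem_setOf_eq] at ha hb ⊢
    have h : a * b * ω * (τ (a * b))⁻¹ = a * (b * ω * (τ b)⁻¹) * (τ a)⁻¹ := by
      simp only [map_mul, mul_inv_rev]
      group
    rw [h, hb, ha]
  inv_mem' := by
    intro a ha
    simp only [Set.mem_setOf_eq] at ha ⊢
    rw [map_inv, inv_inv]
    conv_lhs => rw [← ha]
    group

/-- The set of irreducible complex characters of `G`. -/
def irrCharSet (G : Type) [Group G] : Set (G → ℂ) :=
  {χ | ∃ V : FDRep ℂ G, Simple V ∧ χ = fun g => FDRep.character V g}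

/-- The induced character of `lam : H → ℂ`, via the Frobenius formula. -/
def indChar {G : Type} [Group G] [Fintype G] (H : Subgroup G) (lam : H → ℂ) (g : G) : ℂ :=
  (Nat.card H : ℂ)⁻¹ * ∑ x : G, if h : x⁻¹ * g * x ∈ H then lam ⟨x⁻¹ * g * x, h⟩ else 0

/-- `G` has a generalized involution model with respect to `τ`. -/
def HasGIMwrt (G : Type) [Group G] [Fintype G] (τ : G ≃* G) : Prop :=
  ∃ (R : Finset G) (lam : ∀ ω : G, twistedCent τ ω →* ℂ),
    (∀ ω ∈ R, ω * τ ω = 1) ∧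
    (∀ v : G, v * τ v = 1 → ∃! ω, ω ∈ R ∧ ∃ g : G, g * v * (τ g)⁻¹ = ω) ∧
    (∀ x : G, (∑ ω ∈ R, indChar (twistedCent τ ω) (fun h => lam ω h) x) =
      ∑ᶠ ψ ∈ irrCharSet G, ψ x)

/-- `G` has a generalized involution model. -/
def HasGIM (G : Type) [Group G] [Fintype G] : Prop :=
  ∃ τ : G ≃* G, (∀ g, τ (τ g) = g) ∧ HasGIMwrt G τ

end

noncomputable section

def WP (r n : ℕ) : Type := (Fin n → ZMod r) × Equiv.Perm (Fin n)

namespace WP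

variable {r n : ℕ}

def mk (x : Fin n → ZMod r) (π : Equiv.Perm (Fin n)) : WP r n := (x, π)

instance : Mul (WP r n) := ⟨fun g h => (g.1 ∘ ⇑h.2 + h.1, g.2 * h.2)⟩
instance : One (WP r n) := ⟨((0 : Fin n → ZMod r), 1)⟩
instance : Inv (WP r n) := ⟨fun g => (-(g.1 ∘ ⇑g.2⁻¹), g.2⁻¹)⟩

@[simp] theorem mul_def (g h : WP r n) : g * h = (g.1 ∘ ⇑h.2 + h.1, g.2 * h.2) := rfl
@[simp] theorem one_def : (1 : WP r n) = ((0 : Fin n → ZMod r), 1) := rfl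
@[simp] theorem inv_def (g : WP r n) : g⁻¹ = (-(g.1 ∘ ⇑g.2⁻¹), g.2⁻¹) := rfl
@[simp] theorem mk_fst (x : Fin n → ZMod r) (π : Equiv.Perm (Fin n)) : (mk x π).1 = x := rfl
@[simp] theorem mk_snd (x : Fin n → ZMod r) (π : Equiv.Perm (Fin n)) : (mk x π).2 = π := rfl

instance : Group (WP r n) where
  mul_assoc a b c := by
    refine Prod.ext ?_ ?_
    · funext i
      show ((a.1 ∘ ⇑b.2 + b.1) ∘ ⇑c.2 + c.1) i = (a.1 ∘ ⇑(b.2 * c.2) + (b.1 ∘ ⇑c.2 + c.1)) i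
      simp [Function.comp, add_assoc]
    · show (a.2 * b.2) * c.2 = a.2 * (b.2 * c.2)
      simp [mul_assoc]
  one_mul a := by
    refine Prod.ext ?_ ?_
    · funext i; show ((0 : Fin n → ZMod r) ∘ ⇑a.2 + a.1) i = a.1 i; simp [Function.comp]
    · show 1 * a.2 = a.2; simp
  mul_one a := by
    refine Prod.ext ?_ ?_
    · funext i; show (a.1 ∘ ⇑(1 : Equiv.Perm (Fin n)) + 0) i = a.1 i; simp [Function.comp]
    · show a.2 * 1 = a.2; simp
  inv_mul_cancel a := by
    refine Prod.ext ?_ ?_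
    · funext i; show ((-(a.1 ∘ ⇑a.2⁻¹)) ∘ ⇑a.2 + a.1) i = (0 : Fin n → ZMod r) i; simp [Function.comp]
    · show a.2⁻¹ * a.2 = 1; simp

instance [NeZero r] : Fintype (WP r n) :=
  inferInstanceAs (Fintype ((Fin n → ZMod r) × Equiv.Perm (Fin n)))

/-- `Δ(x,π) = x_1 + ⋯ + x_n ∈ Z/rZ`. -/
def wDelta (g : WP r n) : ZMod r := ∑ i, g.1 i

/-- The transpose `(x,π)ᵀ = (π(x), π⁻¹)`. -/
def wT (g : WP r n) : WP r n := (g.1 ∘ ⇑g.2⁻¹, g.2⁻¹)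

/-- The "complex conjugate" `(x,π) ↦ (-x, π)`. -/
def wBar (g : WP r n) : WP r n := (-g.1, g.2)

theorem wDelta_mul (g h : WP r n) : wDelta (g * h) = wDelta g + wDelta h := by
  simp only [wDelta, mul_def, Pi.add_apply, Function.comp_apply, Finset.sum_add_distrib]
  rw [Equiv.sum_comp h.2 g.1]

theorem wDelta_one : wDelta (1 : WP r n) = 0 := by simp [wDelta]

theorem wDelta_inv (g : WP r n) : wDelta g⁻¹ = - wDelta g := by
  simp only [wDelta, inv_def, Pi.neg_apply, Function.comp_apply, Finset.sum_neg_distrib]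
  rw [Equiv.sum_comp g.2⁻¹ g.1]

theorem wDelta_wT (g : WP r n) : wDelta (wT g) = wDelta g := by
  simp only [wDelta, wT, Function.comp_apply]
  exact Equiv.sum_comp g.2⁻¹ g.1

theorem wDelta_wBar (g : WP r n) : wDelta (wBar g) = - wDelta g := by
  simp [wDelta, wBar, Finset.sum_neg_distrib]

theorem wT_mul (g h : WP r n) : wT (g * h) = wT h * wT g := by
  refine Prod.ext ?_ ?_
  · funext i
    show ((g.1 ∘ ⇑h.2 + h.1) ∘ ⇑(g.2 * h.2)⁻¹) i = ((h.1 ∘ ⇑h.2⁻¹) ∘ ⇑g.2⁻¹ + g.1 ∘ ⇑g.2⁻¹) i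
    simp [wT, Function.comp, Equiv.Perm.mul_apply, add_comm]
  · show (g.2 * h.2)⁻¹ = h.2⁻¹ * g.2⁻¹
    simp [wT, mul_inv_rev]

theorem wT_wT (g : WP r n) : wT (wT g) = g := by
  refine Prod.ext ?_ ?_
  · funext i; simp [wT, Function.comp]
  · simp [wT]

theorem wBar_mul (g h : WP r n) : wBar (g * h) = wBar g * wBar h := by
  refine Prod.ext ?_ ?_
  · funext i; show (-(g.1 ∘ ⇑h.2 + h.1)) i = ((-g.1) ∘ ⇑h.2 + -h.1) i; simp [wBar, Function.comp, add_comm]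
  · show g.2 * h.2 = g.2 * h.2; simp [wBar]

theorem wBar_wBar (g : WP r n) : wBar (wBar g) = g := by
  refine Prod.ext ?_ ?_
  · funext i; simp [wBar]
  · simp [wBar]

end WP

/-- The complex reflection group `G(r,p,n)`, as a subgroup of the wreath product. -/
def Grpn (r p n : ℕ) : Subgroup (WP r n) where
  carrier := {g | WP.wDelta g ∈ AddSubgroup.zmultiples (p : ZMod r)}
  one_mem' := by
    simp only [Set.mem_setOf_eq, WP.wDelta_one]
    exact zero_mem _
  mul_mem' := by
    intro a b ha hb
    simp only [Set.mem_setOf_eq, WP.wDelta_mul] at *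
    exact add_mem ha hb
  inv_mem' := by
    intro a ha
    simp only [Set.mem_setOf_eq, WP.wDelta_inv] at *
    exact neg_mem ha

@[simp] theorem mem_Grpn {r p n : ℕ} {g : WP r n} :
    g ∈ Grpn r p n ↔ WP.wDelta g ∈ AddSubgroup.zmultiples (p : ZMod r) := Iff.rfl

namespace WP

/-- The central element `c = ((1,1,…,1), 1)`. -/
def cElt (r n : ℕ) : WP r n := ((fun _ => 1), 1)

/-- The inversion set of a permutation. -/
def invSet {n : ℕ} (π : Equiv.Perm (Fin n)) : Finset (Fin n × Fin n) :=
  Finset.univ.filter fun q => q.1 < q.2 ∧ π q.2 < π q.1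

/-- The set of 2-cycles `(i,j)` of a permutation. -/
def pairSet {n : ℕ} (π : Equiv.Perm (Fin n)) : Finset (Fin n × Fin n) :=
  Finset.univ.filter fun q => q.1 < q.2 ∧ π q.1 = q.2 ∧ π q.2 = q.1

/-- The set `B(g,ω)` of Adin–Postnikov–Roichman. -/
def Bset (r n : ℕ) (g w : WP r n) : Finset (Fin n) :=
  if Odd r then ∅
  else Finset.univ.filter fun i => w.2 i = i ∧ Odd ((w.1 i).val) ∧
    r / 2 ≤ (g.1 i + (((w.1 i).val / 2 : ℕ) : ZMod r)).val

/-- The sign `sign_{r,n}(g,ω)`. -/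
def signrn (r n : ℕ) (g w : WP r n) : ℚ :=
  (-1 : ℚ) ^ (Bset r n g w).card * (-1 : ℚ) ^ ((invSet g.2 ∩ pairSet w.2).card)

/-- Twisted conjugation `ω ↦ g ω gᵀ` on symmetric elements. -/
def symmConj {r n : ℕ} (g : WP r n) (w : {w : WP r n // wT w = w}) :
    {w : WP r n // wT w = w} :=
  ⟨g * w.1 * wT g, by
    rw [wT_mul, wT_mul, wT_wT, w.2, mul_assoc]⟩

end WP

end

noncomputable section

namespace WP

theorem wT_mem_Grpn {r p n : ℕ} {g : WP r n} (hg : g ∈ Grpn r p n) :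
    wT g ∈ Grpn r p n := by
  rw [mem_Grpn, wDelta_wT]; exact hg

/-- Twisted conjugation `ω ↦ g ω gᵀ` on symmetric elements of `G(r,p,n)`. -/
def symmConjP {r p n : ℕ} (g : Grpn r p n)
    (w : {w : Grpn r p n // wT (w : WP r n) = w}) :
    {w : Grpn r p n // wT (w : WP r n) = w} :=
  ⟨⟨(g : WP r n) * (w.1 : WP r n) * wT (g : WP r n),
      mul_mem (mul_mem g.2 w.1.2) (wT_mem_Grpn g.2)⟩, by
    show wT ((g : WP r n) * (w.1 : WP r n) * wT (g : WP r n)) = _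
    rw [wT_mul, wT_mul, wT_wT, w.2]
    exact (mul_assoc _ _ _).symm⟩

/-- The inverse transpose automorphism `g ↦ ḡ` of `G(r,p,n)`. -/
def barAut (r p n : ℕ) : Grpn r p n ≃* Grpn r p n where
  toFun g := ⟨wBar g.1, by
    rw [mem_Grpn, wDelta_wBar]; exact neg_mem g.2⟩
  invFun g := ⟨wBar g.1, by
    rw [mem_Grpn, wDelta_wBar]; exact neg_mem g.2⟩
  left_inv g := Subtype.ext (wBar_wBar _)
  right_inv g := Subtype.ext (wBar_wBar _)
  map_mul' a b := Subtype.ext (wBar_mul _ _)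

/-- `C(r,p,n) = (Z/rZ)^n ∩ Z(G(r,p,n))`, as a set of wreath product elements. -/
def CCset (r p n : ℕ) : Set (WP r n) :=
  {z | z.2 = 1 ∧ z ∈ Grpn r p n ∧ ∀ h ∈ Grpn r p n, z * h = h * z}

/-- The map `α_{j,k,z} : (x,π) ↦ z^{ℓ(π)} c^{k·Δ(x)} (jx, π)`. -/
def alphaMap (r n : ℕ) (j k : ℤ) (z : WP r n) (g : WP r n) : WP r n :=
  z ^ (invSet g.2).card * cElt r n ^ (k * ((wDelta g).val : ℤ)) * mk (j • g.1) g.2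

/-- The character of the subrepresentation of `ρ_{r,n}` on `V⁺_{r,n}`. -/
def chiPlus (r n : ℕ) [NeZero r] (g : WP r n) : ℚ :=
  ∑ w : {w : WP r n // wT w = w},
    if wDelta w.1 ∈ AddSubgroup.zmultiples (2 : ZMod r) ∧ symmConj g w = w
    then signrn r n g w.1 else 0

/-- The character of the subrepresentation of `ρ_{r,n}` on `V⁻_{r,n}`. -/
def chiMinus (r n : ℕ) [NeZero r] (g : WP r n) : ℚ :=
  ∑ w : {w : WP r n // wT w = w},
    if wDelta w.1 ∉ AddSubgroup.zmultiples (2 : ZMod r) ∧ symmConj g w = w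
    then signrn r n g w.1 else 0

/-- The modified set `B̃(g,ω)` used when `p` and `r/p` are both even. -/
def BsetTilde (r p n : ℕ) (g w : WP r n) : Finset (Fin n) :=
  if wDelta w ∈ AddSubgroup.zmultiples ((2 * p : ℕ) : ZMod r) then
    Finset.univ.filter fun i => w.2 i = i ∧ Odd ((w.1 i).val) ∧
      r / 2 ≤ (g.1 i + (((w.1 i).val / 2 : ℕ) : ZMod r)).val
  else
    Finset.univ.filter fun i => w.2 i = i ∧ Even ((w.1 i).val) ∧
      r / 2 ≤ (g.1 i + (((w.1 i).val / 2 : ℕ) : ZMod r)).val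

/-- The modified sign `s̃ign_{r,p,n}(g,ω)`. -/
def signTilde (r p n : ℕ) (g w : WP r n) : ℚ :=
  (-1 : ℚ) ^ (BsetTilde r p n g w).card * (-1 : ℚ) ^ ((invSet g.2 ∩ pairSet w.2).card)

end WP

end


section Aux

namespace WP

variable {r n : ℕ}

theorem wDelta_pow (g : WP r n) (k : ℕ) : wDelta (g ^ k) = k • wDelta g := by
  induction k with
  | zero => simpa using wDelta_one
  | succ j ih => rw [pow_succ, wDelta_mul, ih, succ_nsmul]

theorem wDelta_zpow (g : WP r n) (k : ℤ) : wDelta (g ^ k) = k • wDelta g := by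
  cases k with
  | ofNat j => simpa using wDelta_pow g j
  | negSucc j =>
      rw [zpow_negSucc, wDelta_inv, wDelta_pow, Int.negSucc_eq]
      simp [add_smul, natCast_zsmul]

theorem cElt_comm (h : WP r n) : cElt r n * h = h * cElt r n := by
  refine Prod.ext ?_ ?_
  · funext i
    show (((fun _ => (1 : ZMod r)) ∘ ⇑h.2 + h.1 : Fin n → ZMod r)) i = ((h.1 ∘ ⇑(1 : Equiv.Perm (Fin n)) + (fun _ => (1 : ZMod r)) : Fin n → ZMod r)) i
    simp [Function.comp, add_comm]
  · show 1 * h.2 = h.2 * 1; simp [cElt]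

theorem wDelta_cElt : wDelta (cElt r n) = (n : ZMod r) := by
  simp [wDelta, cElt]

end WP

end Aux

/-- For `g ∈ G(r,1,n)`: `Ad(g)` restricts to an inner automorphism of `G(r,p,n)`
iff `Ad(g)(π)` is conjugate to `π` in `G(r,p,n)` for all `π ∈ S_n`, iff
`Δ(g) ∈ dZ_r` where `d = gcd(p,n)`. -/
theorem ad_inner_tfae (r p n : ℕ) [NeZero r] (hp : 0 < p) (hn : 0 < n)
    (hpr : p ∣ r) (g : WP r n) :
    List.TFAE
      [∃ h ∈ Grpn r p n, ∀ x ∈ Grpn r p n, g * x * g⁻¹ = h * x * h⁻¹,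
       ∀ π : Equiv.Perm (Fin n), ∃ u ∈ Grpn r p n,
         g * WP.mk 0 π * g⁻¹ = u * WP.mk 0 π * u⁻¹,
       WP.wDelta g ∈ AddSubgroup.zmultiples ((Nat.gcd p n : ℕ) : ZMod r)] := by
  classical
  tfae_have 1 → 2 := by
    rintro ⟨h, hh, hcomm⟩ π
    refine ⟨h, hh, hcomm _ ?_⟩
    have h0 : WP.wDelta (WP.mk (0 : Fin n → ZMod r) π) = 0 := by simp [WP.wDelta, WP.mk]
    rw [mem_Grpn, h0]
    exact zero_mem _
  tfae_have 2 → 3 := by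
    intro H
    obtain ⟨m, rfl⟩ : ∃ m, n = m + 1 := ⟨n - 1, (Nat.succ_pred_eq_of_pos hn).symm⟩
    obtain ⟨u, hu1, hu2⟩ := H (finRotate (m + 1))
    set π : Equiv.Perm (Fin (m + 1)) := finRotate (m + 1) with hπ
    set v : WP r (m + 1) := u⁻¹ * g with hv
    have hvc : v * WP.mk 0 π = WP.mk 0 π * v := by
      calc u⁻¹ * g * WP.mk 0 π = u⁻¹ * (g * WP.mk 0 π * g⁻¹) * g := by group
        _ = u⁻¹ * (u * WP.mk 0 π * u⁻¹) * g := by rw [hu2]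
        _ = WP.mk 0 π * (u⁻¹ * g) := by group
    have hw : ∀ i, v.1 (π i) = v.1 i := by
      intro i
      have h1 := congrArg Prod.fst hvc
      simp only [WP.mul_def, WP.mk_fst, WP.mk_snd, add_zero, Pi.add_apply] at h1
      have h2 := congrFun h1 i
      simpa using h2
    open Fin.NatCast in
    have key : ∀ k : ℕ, v.1 (k : Fin (m + 1)) = v.1 0 := by
      intro k
      induction k with
      | zero => simp
      | succ k ih =>
          have h3 := hw (k : Fin (m + 1))
          rw [hπ, finRotate_succ_apply] at h3
          have h4 : ((k + 1 : ℕ) : Fin (m + 1)) = (k : Fin (m + 1)) + 1 := by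
            push_cast; ring
          rw [h4, h3, ih]
    have hconst : ∀ i, v.1 i = v.1 0 := by
      intro i
      have := key i.val
      rwa [Fin.cast_val_eq_self] at this
    have hdg : WP.wDelta g = WP.wDelta u + WP.wDelta v := by
      have : g = u * v := by rw [hv]; group
      rw [this, WP.wDelta_mul]
    have hdv : WP.wDelta v = ((m + 1 : ℕ) : ZMod r) * v.1 0 := by
      unfold WP.wDelta
      rw [Finset.sum_congr rfl (fun i _ => hconst i)]
      simp [Finset.card_univ, nsmul_eq_mul]
    obtain ⟨k, hk⟩ := AddSubgroup.mem_zmultiples_iff.mp hu1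
    obtain ⟨a, ha⟩ : Nat.gcd p (m + 1) ∣ p := Nat.gcd_dvd_left _ _
    obtain ⟨b, hb⟩ : Nat.gcd p (m + 1) ∣ (m + 1) := Nat.gcd_dvd_right _ _
    rw [AddSubgroup.mem_zmultiples_iff]
    refine ⟨k * a + (v.1 0).val * b, ?_⟩
    have hval : (((v.1 0).val : ℕ) : ZMod r) = v.1 0 := by
      simp [ZMod.natCast_val, ZMod.cast_id]
    rw [hdg, hdv, ← hk, ← hval]
    rw [zsmul_eq_mul, zsmul_eq_mul]
    have hpc : (p : ZMod r) = ((Nat.gcd p (m + 1) : ℕ) : ZMod r) * (a : ZMod r) := by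
      rw [← Nat.cast_mul, ← ha]
    have hnc : ((m + 1 : ℕ) : ZMod r)
        = ((Nat.gcd p (m + 1) : ℕ) : ZMod r) * (b : ZMod r) := by
      rw [← Nat.cast_mul, ← hb]
    rw [hpc, hnc]
    push_cast [ZMod.natCast_val, ZMod.cast_id]
    ring
  tfae_have 3 → 1 := by
    intro H
    obtain ⟨m, hm⟩ := AddSubgroup.mem_zmultiples_iff.mp H
    set A := Nat.gcdA p n with hA
    set B := Nat.gcdB p n with hB
    have hbez : ((Nat.gcd p n : ℕ) : ℤ) = (p : ℤ) * A + (n : ℤ) * B :=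
      Nat.gcd_eq_gcd_ab p n
    set z : WP r n := WP.cElt r n ^ (-(m * B)) with hz
    have hzc : ∀ x : WP r n, z * x = x * z := by
      intro x
      have hc : WP.cElt r n ∈ Subgroup.center (WP r n) :=
        Subgroup.mem_center_iff.mpr fun h => (WP.cElt_comm h).symm
      have := Subgroup.mem_center_iff.mp (zpow_mem hc (-(m * B))) x
      rw [← hz] at this
      exact this.symm
    refine ⟨g * z, ?_, ?_⟩
    · rw [mem_Grpn, WP.wDelta_mul, hz, WP.wDelta_zpow, WP.wDelta_cElt, ← hm,
        AddSubgroup.mem_zmultiples_iff]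
      refine ⟨m * A, ?_⟩
      have hd : ((Nat.gcd p n : ℕ) : ZMod r)
          = (p : ZMod r) * ((A : ℤ) : ZMod r) + (n : ZMod r) * ((B : ℤ) : ZMod r) := by
        have := congrArg (fun t : ℤ => (t : ZMod r)) hbez
        push_cast at this ⊢
        exact this
      rw [zsmul_eq_mul, zsmul_eq_mul, zsmul_eq_mul, hd]
      push_cast
      ring
    · intro x _
      have h1 : z * x * z⁻¹ = x := by
        rw [hzc, mul_assoc, mul_inv_cancel, mul_one]
      symm
      calc g * z * x * (g * z)⁻¹ = g * (z * x * z⁻¹) * g⁻¹ := by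
            rw [mul_inv_rev]; group
        _ = g * x * g⁻¹ := by rw [h1]
  tfae_finish
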